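/- arXiv:2508.16094 — 4 statements merged into one kernel-verified Lean document; each statement's English description precedes it below -/
import Mathlib

section
/- Let H be an n×n real positive definite matrix, G an m×m real positive definite matrix, and B an m×n real matrix. Then the symmetric quasidefinite matrix K = [[H, Bᵀ], [B, −G]] has inertia (n, m, 0): exactly n of its eigenvalues (counted with multiplicity) are positive, exactly m are negative, and none are zero. -/
/-!
On the `n`-dimensional subspace `{(x, 0)}` the quadratic form of `K` is `xᵀHx > 0`, and on the
`m`-dimensional subspace `{(-H⁻¹Bᵀy, y)}` the Schur complement identity turns it into
`-yᵀ(G + BH⁻¹Bᵀ)y < 0`. A subspace on which the form is positive definite injects, via its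
coordinates in an orthonormal eigenbasis, into the span of the eigenvectors with positive
eigenvalues; so `K` has at least `n` positive and at least `m` negative eigenvalues, and since
it has `n + m` eigenvalues in all, these bounds are equalities and none vanishes.
-/

open Finset Matrix Module

namespace Matrix.IsHermitian

variable {ι : Type*} [Fintype ι] [DecidableEq ι] {K : Matrix ι ι ℝ}

theorem dotProduct_mulVec_eq_sum_eigenvalues (hK : K.IsHermitian) (v : ι → ℝ) :
    v ⬝ᵥ K *ᵥ v = ∑ i, hK.eigenvalues i * (⇑(hK.eigenvectorBasis i) ⬝ᵥ v) ^ 2 := by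
  have hKt : Kᵀ = K := by rw [← conjTranspose_eq_transpose_of_trivial, hK.eq]
  have h := hK.eigenvectorBasis.sum_inner_mul_inner (WithLp.toLp 2 v) (WithLp.toLp 2 (K *ᵥ v))
  simp only [EuclideanSpace.inner_eq_star_dotProduct, star_trivial] at h
  rw [dotProduct_comm, ← h]
  refine Finset.sum_congr rfl fun i _ => ?_
  rw [dotProduct_comm (K *ᵥ v), dotProduct_mulVec, ← mulVec_transpose, hKt,
    mulVec_eigenvectorBasis, smul_dotProduct, smul_eq_mul]
  ring

/-- The sign `s` lets the same statement count negative eigenvalues (`s = -1`). -/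
theorem finrank_le_card_filter_mul_eigenvalues_pos (hK : K.IsHermitian) (s : ℝ)
    {V : Type*} [AddCommGroup V] [Module ℝ V] (φ : V →ₗ[ℝ] ι → ℝ)
    (hφ : ∀ x, x ≠ 0 → 0 < s * (φ x ⬝ᵥ K *ᵥ φ x)) :
    finrank ℝ V ≤ #{i | 0 < s * hK.eigenvalues i} := by
  let coords : Matrix {i // 0 < s * hK.eigenvalues i} ι ℝ := fun j => hK.eigenvectorBasis j.1
  have hinj : Function.Injective (coords.mulVecLin ∘ₗ φ) := by
    rw [← LinearMap.ker_eq_bot, LinearMap.ker_eq_bot']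
    intro x hcoords
    by_contra hx
    have hvanish : ∀ i, 0 < s * hK.eigenvalues i → ⇑(hK.eigenvectorBasis i) ⬝ᵥ φ x = 0 :=
      fun i hi => congrFun hcoords ⟨i, hi⟩
    have hnonpos : s * (φ x ⬝ᵥ K *ᵥ φ x) ≤ 0 := by
      rw [hK.dotProduct_mulVec_eq_sum_eigenvalues, Finset.mul_sum]
      refine Finset.sum_nonpos fun i _ => ?_
      by_cases hi : 0 < s * hK.eigenvalues i
      · simp [hvanish i hi]
      · rw [← mul_assoc]
        exact mul_nonpos_of_nonpos_of_nonneg (not_lt.1 hi) (sq_nonneg _)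
    exact (hφ x hx).not_ge hnonpos
  simpa [Fintype.card_subtype] using LinearMap.finrank_le_finrank_of_injective hinj

end Matrix.IsHermitian

section QuasiDefinite

variable {ι κ : Type*} [Fintype ι] [Fintype κ]

theorem sumElim_zero_dotProduct_fromBlocks_mulVec {R : Type*} [CommSemiring R]
    (A : Matrix ι ι R) (B : Matrix ι κ R) (C : Matrix κ ι R) (D : Matrix κ κ R) (x : ι → R) :
    (x ⊕ᵥ 0) ⬝ᵥ fromBlocks A B C D *ᵥ (x ⊕ᵥ 0) = x ⬝ᵥ A *ᵥ x := by
  simp [fromBlocks_mulVec]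

variable [DecidableEq ι] {H : Matrix ι ι ℝ} {G : Matrix κ κ ℝ} {B : Matrix κ ι ℝ}

theorem graph_dotProduct_fromBlocks_mulVec (hH : H.PosDef) (y : κ → ℝ) :
    (-((H⁻¹ * Bᵀ) *ᵥ y) ⊕ᵥ y) ⬝ᵥ fromBlocks H Bᵀ B (-G) *ᵥ (-((H⁻¹ * Bᵀ) *ᵥ y) ⊕ᵥ y) =
      -(y ⬝ᵥ (G + B * H⁻¹ * Bᵀ) *ᵥ y) := by
  have := hH.isUnit.invertible
  have h := schur_complement_eq₁₁ Bᵀ (-G) (-((H⁻¹ * Bᵀ) *ᵥ y)) y hH.isHermitian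
  simp only [conjTranspose_eq_transpose_of_trivial, transpose_transpose, star_trivial,
    neg_add_cancel, zero_vecMul, zero_dotProduct, zero_add] at h
  rw [dotProduct_mulVec, h, dotProduct_mulVec, ← neg_add', vecMul_neg, neg_dotProduct]

variable [DecidableEq κ]

theorem card_le_card_filter_eigenvalues_pos_of_fromBlocks (hH : H.PosDef)
    (hK : (fromBlocks H Bᵀ B (-G)).IsHermitian) :
    Fintype.card ι ≤ #{i | 0 < hK.eigenvalues i} := by
  let φ := (LinearEquiv.sumArrowLequivProdArrow ι κ ℝ ℝ).symm.toLinearMap ∘ₗ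
    LinearMap.inl ℝ (ι → ℝ) (κ → ℝ)
  have hφ : ∀ x, x ≠ 0 → 0 < 1 * (φ x ⬝ᵥ fromBlocks H Bᵀ B (-G) *ᵥ φ x) := fun x hx => by
    change 0 < 1 * ((x ⊕ᵥ 0) ⬝ᵥ _ *ᵥ (x ⊕ᵥ 0))
    rw [one_mul, sumElim_zero_dotProduct_fromBlocks_mulVec]
    exact hH.dotProduct_mulVec_pos hx
  simpa using hK.finrank_le_card_filter_mul_eigenvalues_pos 1 φ hφ

theorem card_le_card_filter_eigenvalues_neg_of_fromBlocks (hH : H.PosDef) (hG : G.PosDef)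
    (hK : (fromBlocks H Bᵀ B (-G)).IsHermitian) :
    Fintype.card κ ≤ #{i | hK.eigenvalues i < 0} := by
  let φ := (LinearEquiv.sumArrowLequivProdArrow ι κ ℝ ℝ).symm.toLinearMap ∘ₗ
    (-(H⁻¹ * Bᵀ).mulVecLin).prod LinearMap.id
  have hS : (G + B * H⁻¹ * Bᵀ).PosDef := hG.add_posSemidef (by
    simpa using hH.inv.posSemidef.mul_mul_conjTranspose_same B)
  have hφ : ∀ y, y ≠ 0 → 0 < -1 * (φ y ⬝ᵥ fromBlocks H Bᵀ B (-G) *ᵥ φ y) := fun y hy => by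
    change 0 < -1 * ((-((H⁻¹ * Bᵀ) *ᵥ y) ⊕ᵥ y) ⬝ᵥ _ *ᵥ (-((H⁻¹ * Bᵀ) *ᵥ y) ⊕ᵥ y))
    rw [graph_dotProduct_fromBlocks_mulVec hH, neg_one_mul, neg_neg]
    exact hS.dotProduct_mulVec_pos hy
  simpa using hK.finrank_le_card_filter_mul_eigenvalues_pos (-1) φ hφ

end QuasiDefinite

theorem card_filter_pos_add_card_filter_neg_add_card_filter_eq_zero {ι : Type*} [Fintype ι]
    (f : ι → ℝ) :
    #{i | 0 < f i} + #{i | f i < 0} + #{i | f i = 0} = Fintype.card ι := by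
  classical
  have hnonpos : #{i | f i < 0} + #{i | f i = 0} = #{i | f i ≤ 0} := by
    rw [← card_union_of_disjoint (disjoint_filter.2 fun i _ h => h.ne), ← filter_or]
    simp_rw [le_iff_lt_or_eq]
  rw [add_assoc, hnonpos]
  simpa using card_filter_add_card_filter_not (s := univ) (fun i => 0 < f i)

/-- An SQD matrix `K = [[H, Bᵀ], [B, −G]]` with `H` (size `n`) and `G` (size `m`)
positive definite has inertia `(n, m, 0)`. -/
theorem sqd_inertia (n m : ℕ)
    (H : Matrix (Fin n) (Fin n) ℝ) (G : Matrix (Fin m) (Fin m) ℝ)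
    (B : Matrix (Fin m) (Fin n) ℝ)
    (hH : H.PosDef) (hG : G.PosDef)
    (hK : (Matrix.fromBlocks H Bᵀ B (-G)).IsHermitian) :
    (Finset.univ.filter fun i => 0 < hK.eigenvalues i).card = n ∧
    (Finset.univ.filter fun i => hK.eigenvalues i < 0).card = m ∧
    (Finset.univ.filter fun i => hK.eigenvalues i = 0).card = 0 := by
  have hpos := card_le_card_filter_eigenvalues_pos_of_fromBlocks hH hK
  have hneg := card_le_card_filter_eigenvalues_neg_of_fromBlocks hH hG hK
  have htotal := card_filter_pos_add_card_filter_neg_add_card_filter_eq_zero hK.eigenvalues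
  simp only [Fintype.card_sum, Fintype.card_fin] at hpos hneg htotal
  omega
end

section
/- Let K be an (n+m)×(n+m) symmetric quasidefinite matrix, i.e., K = [[H, Bᵀ], [B, −G]] with H and G positive definite. Then for every permutation σ of the index set {1, …, n+m}, the symmetrically permuted matrix K' defined by K'ᵢⱼ = K_{σ(i)σ(j)} admits a factorization K' = L D Lᵀ, where L is a lower triangular matrix with unit diagonal and D is a diagonal matrix all of whose diagonal entries are nonzero. (In other words, SQD matrices are strongly factorizable: the LDLᵀ factorization exists for any symmetric permutation, so no numerical pivoting is needed for existence.) -/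
/-!
A principal submatrix of `K = [[H, Bᵀ], [B, -G]]` is nonsingular: extending a kernel vector `x`
by zero gives `y = (u, v)` with `y s * (K y) s = 0` for every `s`, and pairing `K y` with
`(u, -v)` makes the `B`-terms cancel, leaving `uᵀ H u + vᵀ G v = 0`, so `y = 0`. Hence every
symmetric permutation of `K` has nonzero leading principal minors, and such a symmetric matrix
has an `LDLᵀ` factorization by bordering: the new row `ℓ` of `L` solves `(L' D') ℓ = b`, and
all pivots are nonzero because `det A = ∏ dᵢ`.
-/

open Matrix

section Quasidefinite

variable {n m : Type*} [Fintype n] [Fintype m]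

theorem Matrix.sumElim_neg_dotProduct_fromBlocks_mulVec {R : Type*} [CommRing R]
    (H : Matrix n n R) (G : Matrix m m R) (B : Matrix m n R) (u : n → R) (v : m → R) :
    Sum.elim u (-v) ⬝ᵥ (fromBlocks H Bᵀ B (-G) *ᵥ Sum.elim u v) =
      u ⬝ᵥ (H *ᵥ u) + v ⬝ᵥ (G *ᵥ v) := by
  have hB : u ⬝ᵥ (Bᵀ *ᵥ v) = v ⬝ᵥ (B *ᵥ u) := by
    rw [dotProduct_mulVec, vecMul_transpose, dotProduct_comm]
  simp only [fromBlocks_mulVec, sumElim_dotProduct_sumElim, Sum.elim_comp_inl,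
    Sum.elim_comp_inr, dotProduct_add, neg_dotProduct, neg_mulVec, dotProduct_neg, hB]
  ring

theorem Matrix.PosDef.eq_zero_of_dotProduct_mulVec_eq_zero {R : Type*} [Ring R] [PartialOrder R]
    [StarRing R] [TrivialStar R] {M : Matrix n n R} (hM : M.PosDef) {x : n → R}
    (hx : x ⬝ᵥ (M *ᵥ x) = 0) : x = 0 := by
  by_contra h
  simpa [hx] using hM.dotProduct_mulVec_pos h

variable {𝕜 : Type*} [Field 𝕜] [LinearOrder 𝕜] [IsStrictOrderedRing 𝕜] [StarRing 𝕜]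
  [TrivialStar 𝕜] {H : Matrix n n 𝕜} {G : Matrix m m 𝕜}

theorem Matrix.PosDef.eq_zero_of_mul_fromBlocks_mulVec_eq_zero (hH : H.PosDef)
    (B : Matrix m n 𝕜) (hG : G.PosDef) {y : n ⊕ m → 𝕜}
    (hy : ∀ s, y s * (fromBlocks H Bᵀ B (-G) *ᵥ y) s = 0) : y = 0 := by
  set u := y ∘ Sum.inl
  set v := y ∘ Sum.inr
  have hquad : u ⬝ᵥ (H *ᵥ u) + v ⬝ᵥ (G *ᵥ v) = 0 := by
    rw [← sumElim_neg_dotProduct_fromBlocks_mulVec H G B, Sum.elim_comp_inl_inr]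
    refine Finset.sum_eq_zero fun s _ => ?_
    cases s <;> simp [u, v, hy]
  have hu := hH.posSemidef.dotProduct_mulVec_nonneg u
  have hv := hG.posSemidef.dotProduct_mulVec_nonneg v
  rw [star_trivial] at hu hv
  have hu0 : u = 0 := hH.eq_zero_of_dotProduct_mulVec_eq_zero (by linarith)
  have hv0 : v = 0 := hG.eq_zero_of_dotProduct_mulVec_eq_zero (by linarith)
  have : Sum.elim u v = 0 := by rw [hu0, hv0, Sum.elim_zero_zero]
  rwa [Sum.elim_comp_inl_inr] at this

theorem Matrix.PosDef.det_submatrix_fromBlocks_ne_zero (hH : H.PosDef) (B : Matrix m n 𝕜)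
    (hG : G.PosDef) {ι : Type*} [Fintype ι] [DecidableEq ι] {g : ι → n ⊕ m}
    (hg : g.Injective) : ((fromBlocks H Bᵀ B (-G)).submatrix g g).det ≠ 0 := by
  set K := fromBlocks H Bᵀ B (-G)
  intro hdet
  obtain ⟨x, hx0, hx⟩ := exists_mulVec_eq_zero_iff.mpr hdet
  set y := Function.extend g x 0
  have hy_off : ∀ s ∉ Set.range g, y s = 0 := fun s hs =>
    Function.extend_apply' _ _ _ (by simpa using hs)
  have hKy : ∀ i, (K *ᵥ y) (g i) = (K.submatrix g g *ᵥ x) i := fun i =>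
    (Fintype.sum_of_injective g hg _ _ (fun s hs => by simp [hy_off s hs])
      fun j => by simp [y, hg.extend_apply]).symm
  have hy : y = 0 := hH.eq_zero_of_mul_fromBlocks_mulVec_eq_zero B hG fun s => by
    by_cases hs : s ∈ Set.range g
    · obtain ⟨i, rfl⟩ := hs
      rw [hKy, hx, Pi.zero_apply, mul_zero]
    · rw [hy_off s hs, zero_mul]
  exact hx0 (funext fun i => by simpa [y, hg.extend_apply] using congrFun hy (g i))

end Quasidefinite

section LDL

variable {R : Type*}

theorem Matrix.mul_diagonal_mul_transpose_apply [CommSemiring R] {ι : Type*} [Fintype ι]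
    [DecidableEq ι] (L : Matrix ι ι R) (d : ι → R) (i j : ι) :
    (L * diagonal d * Lᵀ) i j = ∑ k, L i k * d k * L j k := by
  rw [mul_apply]
  simp only [mul_diagonal, transpose_apply]

theorem Matrix.det_of_isLowerTriangular_of_diag_eq_one [CommRing R] {ι : Type*} [Fintype ι]
    [DecidableEq ι] [LinearOrder ι] {L : Matrix ι ι R} (hL : L.IsLowerTriangular)
    (hL1 : ∀ i, L i i = 1) : L.det = 1 := by
  simp [det_of_isLowerTriangular L hL, hL1]

theorem Matrix.exists_ldl_of_submatrix_castSucc [Field R] {N : ℕ}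
    {A : Matrix (Fin (N + 1)) (Fin (N + 1)) R} (hA : A.IsSymm)
    {L' : Matrix (Fin N) (Fin N) R} {d' : Fin N → R} (hL' : L'.IsLowerTriangular)
    (hL'1 : ∀ i, L' i i = 1) (hd' : ∀ i, d' i ≠ 0)
    (hA' : A.submatrix Fin.castSucc Fin.castSucc = L' * diagonal d' * L'ᵀ) :
    ∃ (L : Matrix (Fin (N + 1)) (Fin (N + 1)) R) (d : Fin (N + 1) → R),
      L.IsLowerTriangular ∧ (∀ i, L i i = 1) ∧ A = L * diagonal d * Lᵀ := by
  have hunit : IsUnit (L' * diagonal d') := by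
    rw [isUnit_iff_isUnit_det, det_mul, det_of_isLowerTriangular_of_diag_eq_one hL' hL'1,
      one_mul, det_diagonal]
    exact (Finset.prod_ne_zero_iff.mpr fun i _ => hd' i).isUnit
  obtain ⟨ℓ, hℓ⟩ :=
    mulVec_surjective_iff_isUnit.mpr hunit fun a => A a.castSucc (Fin.last N)
  have hcol : ∀ a, ∑ k, L' a k * d' k * ℓ k = A a.castSucc (Fin.last N) := fun a => by
    simpa [mulVec, dotProduct, mul_diagonal] using congrFun hℓ a
  have hblock : ∀ a c, ∑ k, L' a k * d' k * L' c k = A a.castSucc c.castSucc := fun a c => by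
    rw [← mul_diagonal_mul_transpose_apply, ← hA', submatrix_apply]
  let L : Matrix (Fin (N + 1)) (Fin (N + 1)) R :=
    of (Fin.snoc (fun a => Fin.snoc (L' a) 0) (Fin.snoc ℓ 1))
  let d : Fin (N + 1) → R :=
    Fin.snoc d' (A (Fin.last N) (Fin.last N) - ∑ k, ℓ k * d' k * ℓ k)
  refine ⟨L, d, fun i j hij => ?_, fun i => ?_, ?_⟩
  · induction i using Fin.lastCases with
    | last => exact absurd hij (Fin.le_last j).not_gt
    | cast a =>
      induction j using Fin.lastCases with
      | last => simp [L]
      | cast c => simpa [L] using hL' (Fin.castSucc_lt_castSucc_iff.mp hij)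
  · induction i using Fin.lastCases <;> simp [L, hL'1]
  · ext i j
    rw [mul_diagonal_mul_transpose_apply, Fin.sum_univ_castSucc]
    induction i using Fin.lastCases with
    | last =>
      induction j using Fin.lastCases with
      | last => simp [L, d]
      | cast c => simp [L, d, hA.apply, ← hcol, mul_comm, mul_left_comm]
    | cast a =>
      induction j using Fin.lastCases with
      | last => simp [L, d, hcol]
      | cast c => simp [L, d, hblock]

theorem Matrix.det_mul_diagonal_mul_transpose [CommRing R] {ι : Type*} [Fintype ι]
    [DecidableEq ι] [LinearOrder ι] {L : Matrix ι ι R} (hL : L.IsLowerTriangular)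
    (hL1 : ∀ i, L i i = 1) (d : ι → R) : (L * diagonal d * Lᵀ).det = ∏ i, d i := by
  rw [det_mul, det_mul, det_transpose, det_of_isLowerTriangular_of_diag_eq_one hL hL1,
    det_diagonal, one_mul, mul_one]

theorem Matrix.exists_ldl_of_det_submatrix_castLE_ne_zero [Field R] :
    ∀ {N : ℕ} (A : Matrix (Fin N) (Fin N) R), A.IsSymm →
      (∀ k (hk : k ≤ N), (A.submatrix (Fin.castLE hk) (Fin.castLE hk)).det ≠ 0) →
      ∃ (L : Matrix (Fin N) (Fin N) R) (d : Fin N → R),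
        L.IsLowerTriangular ∧ (∀ i, L i i = 1) ∧ (∀ i, d i ≠ 0) ∧
          A = L * diagonal d * Lᵀ
  | 0, A, _, _ => ⟨1, 0, fun i => i.elim0, fun i => i.elim0, fun i => i.elim0,
      Subsingleton.elim _ _⟩
  | N + 1, A, hA, hminors => by
    obtain ⟨L', d', hL', hL'1, hd', hA'⟩ := exists_ldl_of_det_submatrix_castLE_ne_zero
      (A.submatrix Fin.castSucc Fin.castSucc) (hA.submatrix _) fun k hk =>
        hminors k (hk.trans N.le_succ)
    obtain ⟨L, d, hL, hL1, rfl⟩ := exists_ldl_of_submatrix_castSucc hA hL' hL'1 hd' hA'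
    have hdet := hminors (N + 1) le_rfl
    rw [Fin.castLE_rfl, submatrix_id_id, det_mul_diagonal_mul_transpose hL hL1] at hdet
    exact ⟨L, d, hL, hL1, fun i => Finset.prod_ne_zero_iff.mp hdet i (Finset.mem_univ i),
      rfl⟩

end LDL

/-- SQD matrices are strongly factorizable: for every symmetric permutation, the permuted
matrix admits an LDLᵀ factorization with unit lower triangular `L` and diagonal `D`
having nonzero diagonal entries. -/
theorem sqd_strongly_factorizable (n m : ℕ)
    (H : Matrix (Fin n) (Fin n) ℝ) (G : Matrix (Fin m) (Fin m) ℝ)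
    (B : Matrix (Fin m) (Fin n) ℝ)
    (hH : H.PosDef) (hG : G.PosDef)
    (K : Matrix (Fin (n + m)) (Fin (n + m)) ℝ)
    (hK : K = (Matrix.fromBlocks H Bᵀ B (-G)).submatrix
        finSumFinEquiv.symm finSumFinEquiv.symm)
    (σ : Equiv.Perm (Fin (n + m))) :
    ∃ (L : Matrix (Fin (n + m)) (Fin (n + m)) ℝ) (d : Fin (n + m) → ℝ),
      (∀ i j, i < j → L i j = 0) ∧ (∀ i, L i i = 1) ∧ (∀ i, d i ≠ 0) ∧
      K.submatrix σ σ = L * Matrix.diagonal d * Lᵀ := by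
  have hsymm : K.IsSymm := hK ▸ IsSymm.submatrix (IsSymm.fromBlocks
    (isHermitian_iff_isSymm.mp hH.isHermitian) rfl (isHermitian_iff_isSymm.mp hG.isHermitian).neg) _
  obtain ⟨L, d, hL, hL1, hd, hfact⟩ := exists_ldl_of_det_submatrix_castLE_ne_zero
    (K.submatrix σ σ) (hsymm.submatrix σ) fun k hk => by
      rw [hK]
      exact hH.det_submatrix_fromBlocks_ne_zero B hG
        ((finSumFinEquiv.symm.injective.comp σ.injective).comp (Fin.castLE_injective hk))
  exact ⟨L, d, fun i j hij => hL hij, hL1, hd, hfact⟩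
end

section
/- Let K be an (n+m)×(n+m) symmetric quasidefinite matrix, i.e., K = [[H, Bᵀ], [B, −G]] with H n×n positive definite and G m×m positive definite, and suppose K = L D Lᵀ where L is lower triangular with unit diagonal and D is diagonal. Then exactly n of the diagonal entries of D are positive and exactly m are negative (and none are zero). -/
/-!
Sylvester's law of inertia, one inequality at a time. The substitution `y = Lᵀ x` turns the
quadratic form of `L D Lᵀ` into `∑ dᵢ yᵢ²`, so on a subspace where this form is positive definite
the map `x ↦ (yᵢ)_{dᵢ > 0}` is injective: at least as many `dᵢ` are positive as the dimension of
that subspace. The block `H` of `K` and the block `G` of `-K = L (-D) Lᵀ` give subspaces of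
dimensions `n` and `m`; with only `n + m` indices, both bounds are equalities and no `dᵢ` vanishes.
-/

open Matrix Finset

section

variable {ι κ 𝕜 : Type*} [Fintype ι] [DecidableEq ι]

theorem Matrix.dotProduct_mul_diagonal_mul_transpose_mulVec [Fintype κ] [CommRing 𝕜]
    (M : Matrix κ ι 𝕜) (d : ι → 𝕜) (x : κ → 𝕜) :
    x ⬝ᵥ ((M * diagonal d * Mᵀ) *ᵥ x) = ∑ i, d i * (Mᵀ *ᵥ x) i ^ 2 := by
  rw [← mulVec_mulVec, ← mulVec_mulVec, dotProduct_mulVec, ← mulVec_transpose]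
  simp only [dotProduct, mulVec_diagonal]
  exact sum_congr rfl fun i _ => by ring

theorem Matrix.submatrix_mul_diagonal_mul_transpose [CommRing 𝕜]
    (L : Matrix ι ι 𝕜) (d : ι → 𝕜) (f : κ → ι) :
    (L * diagonal d * Lᵀ).submatrix f f =
      L.submatrix f id * diagonal d * (L.submatrix f id)ᵀ := by
  ext; simp [mul_apply]

theorem Matrix.card_le_card_filter_pos_of_posDef_mul_diagonal_mul_transpose [Fintype κ]
    [Field 𝕜] [LinearOrder 𝕜] [IsStrictOrderedRing 𝕜] [StarRing 𝕜] [TrivialStar 𝕜]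
    {M : Matrix κ ι 𝕜} {d : ι → 𝕜} (h : (M * diagonal d * Mᵀ).PosDef) :
    Fintype.card κ ≤ #{i | 0 < d i} := by
  let restrict : (κ → 𝕜) →ₗ[𝕜] ({i // 0 < d i} → 𝕜) :=
    (LinearMap.funLeft 𝕜 𝕜 Subtype.val).comp Mᵀ.mulVecLin
  have hinj : Function.Injective restrict := by
    rw [← LinearMap.ker_eq_bot, LinearMap.ker_eq_bot']
    intro x hx
    by_contra hne
    have hpos := h.dotProduct_mulVec_pos hne
    rw [star_trivial, dotProduct_mul_diagonal_mul_transpose_mulVec] at hpos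
    refine hpos.not_ge (sum_nonpos fun i _ => ?_)
    rcases le_or_gt (d i) 0 with hi | hi
    · exact mul_nonpos_of_nonpos_of_nonneg hi (sq_nonneg _)
    · have : (Mᵀ *ᵥ x) i = 0 := congrFun hx ⟨i, hi⟩
      simp [this]
  simpa [Fintype.card_subtype] using LinearMap.finrank_le_finrank_of_injective hinj

theorem Matrix.card_le_card_filter_pos_of_posDef_submatrix [Fintype κ]
    [Field 𝕜] [LinearOrder 𝕜] [IsStrictOrderedRing 𝕜] [StarRing 𝕜] [TrivialStar 𝕜]
    {K L : Matrix ι ι 𝕜} {d : ι → 𝕜} (hK : K = L * diagonal d * Lᵀ) {f : κ → ι}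
    (h : (K.submatrix f f).PosDef) : Fintype.card κ ≤ #{i | 0 < d i} := by
  rw [hK, submatrix_mul_diagonal_mul_transpose] at h
  exact card_le_card_filter_pos_of_posDef_mul_diagonal_mul_transpose h

theorem card_filter_pos_add_card_filter_neg_add_card_filter_eq_zero_eq_card
    [Zero 𝕜] [LinearOrder 𝕜] (d : ι → 𝕜) :
    #{i | 0 < d i} + #{i | d i < 0} + #{i | d i = 0} = Fintype.card ι := by
  have hdisj₁ : Disjoint (α := Finset ι) {i | 0 < d i} {i | d i < 0} :=
    disjoint_filter.2 fun i _ h₁ h₂ => h₁.asymm h₂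
  have hdisj₂ : Disjoint (α := Finset ι) {i | 0 < d i ∨ d i < 0} {i | d i = 0} :=
    disjoint_filter.2 fun i _ h₁ h₂ => by rcases h₁ with h₁ | h₁ <;> simp [h₂] at h₁
  rw [← card_union_of_disjoint hdisj₁, ← filter_or, ← card_union_of_disjoint hdisj₂,
    ← filter_or, filter_true_of_mem fun i _ => ?_, card_univ]
  rcases lt_trichotomy 0 (d i) with h | h | h <;> simp [h]

theorem card_filter_pos_neg_zero_eq_of_le_of_le
    [Zero 𝕜] [LinearOrder 𝕜] {d : ι → 𝕜} {n m : ℕ} (hcard : Fintype.card ι = n + m)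
    (hpos : n ≤ #{i | 0 < d i}) (hneg : m ≤ #{i | d i < 0}) :
    #{i | 0 < d i} = n ∧ #{i | d i < 0} = m ∧ #{i | d i = 0} = 0 := by
  have := card_filter_pos_add_card_filter_neg_add_card_filter_eq_zero_eq_card d
  omega

end

theorem sqd_ldlt_diagonal_signs_general (n m : ℕ)
    (H : Matrix (Fin n) (Fin n) ℝ) (G : Matrix (Fin m) (Fin m) ℝ)
    (B : Matrix (Fin m) (Fin n) ℝ)
    (hH : H.PosDef) (hG : G.PosDef)
    (K : Matrix (Fin (n + m)) (Fin (n + m)) ℝ)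
    (hK : K = (Matrix.fromBlocks H Bᵀ B (-G)).submatrix
        finSumFinEquiv.symm finSumFinEquiv.symm)
    (L : Matrix (Fin (n + m)) (Fin (n + m)) ℝ) (d : Fin (n + m) → ℝ)
    (hfact : K = L * Matrix.diagonal d * Lᵀ) :
    (Finset.univ.filter fun i => 0 < d i).card = n ∧
    (Finset.univ.filter fun i => d i < 0).card = m ∧
    (Finset.univ.filter fun i => d i = 0).card = 0 := by
  have hK₁₁ : K.submatrix (finSumFinEquiv ∘ Sum.inl) (finSumFinEquiv ∘ Sum.inl) = H := by
    ext; simp [hK]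
  have hK₂₂ : (-K).submatrix (finSumFinEquiv ∘ Sum.inr) (finSumFinEquiv ∘ Sum.inr) = G := by
    ext; simp [hK]
  have hfact_neg : -K = L * diagonal (-d) * Lᵀ := by
    rw [hfact, ← neg_mul, ← mul_neg, diagonal_neg]; rfl
  -- `convert` rather than `simpa`: the generic lemma's `Decidable (0 < d i)` instance is not
  -- syntactically the one elaborated for `ℝ` in the statement.
  have hpos : n ≤ #{i | 0 < d i} := by
    convert card_le_card_filter_pos_of_posDef_submatrix hfact (hK₁₁ ▸ hH) using 1
    exact (Fintype.card_fin n).symm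
  have hneg : m ≤ #{i | d i < 0} := by
    convert card_le_card_filter_pos_of_posDef_submatrix hfact_neg (hK₂₂ ▸ hG) using 1
    · exact (Fintype.card_fin m).symm
    · simp only [Pi.neg_apply, neg_pos]
  exact card_filter_pos_neg_zero_eq_of_le_of_le (by simp) hpos hneg

/-- If an SQD matrix `K = [[H, Bᵀ], [B, −G]]` (with `H` of size `n` and `G` of size `m`
positive definite) has an LDLᵀ factorization `K = L D Lᵀ` with `L` unit lower triangular
and `D` diagonal, then exactly `n` diagonal entries of `D` are positive, exactly `m`
are negative, and none are zero. -/
theorem sqd_ldlt_diagonal_signs (n m : ℕ)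
    (H : Matrix (Fin n) (Fin n) ℝ) (G : Matrix (Fin m) (Fin m) ℝ)
    (B : Matrix (Fin m) (Fin n) ℝ)
    (hH : H.PosDef) (hG : G.PosDef)
    (K : Matrix (Fin (n + m)) (Fin (n + m)) ℝ)
    (hK : K = (Matrix.fromBlocks H Bᵀ B (-G)).submatrix
        finSumFinEquiv.symm finSumFinEquiv.symm)
    (L : Matrix (Fin (n + m)) (Fin (n + m)) ℝ) (d : Fin (n + m) → ℝ)
    (hLlower : ∀ i j, i < j → L i j = 0) (hLdiag : ∀ i, L i i = 1)
    (hfact : K = L * Matrix.diagonal d * Lᵀ) :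
    (Finset.univ.filter fun i => 0 < d i).card = n ∧
    (Finset.univ.filter fun i => d i < 0).card = m ∧
    (Finset.univ.filter fun i => d i = 0).card = 0 :=
  sqd_ldlt_diagonal_signs_general n m H G B hH hG K hK L d hfact
end

section
/- Let W be an n×n real symmetric matrix, J an m×n real matrix, D an m×m diagonal matrix with strictly positive diagonal entries, and δₚ ≥ 0. Consider the augmented KKT matrix K = [[W + δₚI, Jᵀ], [J, −D]]. Then K has inertia (n, m, 0) (exactly n positive eigenvalues, m negative eigenvalues, and no zero eigenvalues) if and only if the primal condensed matrix W + δₚI + Jᵀ D⁻¹ J is positive definite. -/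
/-!
Eliminating the `-D` block is a congruence: `K = Lᵀ diag(S, -D) L` with `L` unit lower block
triangular, where `S = W + δₚI + Jᵀ D⁻¹ J` is the Schur complement. Diagonalising `S` and `D`
orthogonally makes `K` congruent to a diagonal matrix carrying the eigenvalues of `S` and of `-D`,
so by Sylvester's law of inertia `K` has as many positive eigenvalues as `S` and `m` more negative
ones. Hence `K` has inertia `(n, m, 0)` exactly when every eigenvalue of `S` is positive.
-/

open Matrix Finset QuadraticMap QuadraticForm

theorem Finset.card_filter_sum_elim {α β γ : Type*} [Fintype α] [Fintype β] (p : γ → Prop)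
    [DecidablePred p] (f : α → γ) (g : β → γ) :
    #{x | p (Sum.elim f g x)} = #{a | p (f a)} + #{b | p (g b)} := by
  rw [← card_disjSum]
  congr 1
  ext (a | b) <;> simp

theorem Finset.card_pos_add_card_neg_add_card_eq_zero {ι 𝕜 : Type*} [Fintype ι] [LinearOrder 𝕜]
    [Zero 𝕜] (f : ι → 𝕜) :
    #{i | 0 < f i} + #{i | f i < 0} + #{i | f i = 0} = Fintype.card ι := by
  classical
  rw [← card_union_of_disjoint, ← card_union_of_disjoint, ← card_univ]
  · congr 1
    ext i
    simp only [mem_union, mem_filter, mem_univ, true_and, iff_true]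
    rcases lt_trichotomy (f i) 0 with h | h | h <;> simp [h]
  · refine disjoint_union_left.2 ⟨disjoint_filter.2 ?_, disjoint_filter.2 ?_⟩ <;>
      intro i _ h₁ h₂ <;> simp [h₂] at h₁
  · exact disjoint_filter.2 fun i _ h₁ h₂ => (h₁ : 0 < f i).not_gt h₂

namespace Matrix

variable {ι κ R : Type*} [Fintype ι] [DecidableEq ι] [Fintype κ] [DecidableEq κ] [CommRing R]

def IsCongr (A B : Matrix ι ι R) : Prop :=
  ∃ P : Matrix ι ι R, IsUnit P ∧ A = Pᵀ * B * P

namespace IsCongr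

theorem trans {A B C : Matrix ι ι R} (hAB : A.IsCongr B) (hBC : B.IsCongr C) : A.IsCongr C := by
  obtain ⟨P, hP, rfl⟩ := hAB
  obtain ⟨Q, hQ, rfl⟩ := hBC
  exact ⟨Q * P, hQ.mul hP, by simp only [transpose_mul, Matrix.mul_assoc]⟩

theorem neg {A B : Matrix ι ι R} (h : A.IsCongr B) : (-A).IsCongr (-B) := by
  obtain ⟨P, hP, rfl⟩ := h
  exact ⟨P, hP, by simp⟩

theorem fromBlocks {A A' : Matrix ι ι R} {C C' : Matrix κ κ R} (hA : A.IsCongr A')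
    (hC : C.IsCongr C') : (fromBlocks A 0 0 C).IsCongr (fromBlocks A' 0 0 C') := by
  obtain ⟨P, hP, rfl⟩ := hA
  obtain ⟨Q, hQ, rfl⟩ := hC
  refine ⟨Matrix.fromBlocks P 0 0 Q, ?_, ?_⟩
  · rw [isUnit_iff_isUnit_det, det_fromBlocks_zero₁₂]
    exact ((isUnit_iff_isUnit_det P).1 hP).mul ((isUnit_iff_isUnit_det Q).1 hQ)
  · simp [fromBlocks_transpose, fromBlocks_multiply]

end IsCongr

theorem toQuadraticForm'_apply (A : Matrix ι ι R) (v : ι → R) :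
    A.toQuadraticForm' v = v ⬝ᵥ A *ᵥ v :=
  toLinearMap₂'_apply' A v v

theorem toQuadraticForm'_transpose_mul_mul (A : Matrix κ κ R) (P : Matrix κ ι R) :
    (Pᵀ * A * P).toQuadraticForm' = A.toQuadraticForm'.comp (toLin' P) := by
  ext v
  rw [toQuadraticForm'_apply, QuadraticMap.comp_apply, toQuadraticForm'_apply, toLin'_apply,
    ← mulVec_mulVec, ← mulVec_mulVec, dotProduct_mulVec, vecMul_transpose]

theorem toQuadraticForm'_diagonal (w : ι → R) :
    (diagonal w).toQuadraticForm' = weightedSumSquares R w := by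
  ext v
  simp only [toQuadraticForm'_apply, weightedSumSquares_apply, dotProduct, mulVec_diagonal,
    smul_eq_mul]
  exact Finset.sum_congr rfl fun i _ => by ring

theorem IsCongr.toQuadraticForm'_equivalent {A B : Matrix ι ι R} (h : A.IsCongr B) :
    A.toQuadraticForm'.Equivalent B.toQuadraticForm' := by
  obtain ⟨P, hP, rfl⟩ := h
  rw [toQuadraticForm'_transpose_mul_mul]
  exact ⟨(isometryEquivOfCompLinearEquiv B.toQuadraticForm' (toLinearEquiv' P hP.invertible)).symm⟩

theorem isCongr_fromBlocks_schur (A : Matrix ι ι R) (B : Matrix κ ι R) {C : Matrix κ κ R}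
    (hCu : IsUnit C) (hC : Cᵀ = C) :
    (Matrix.fromBlocks A Bᵀ B C).IsCongr (Matrix.fromBlocks (A - Bᵀ * C⁻¹ * B) 0 0 C) := by
  have := hCu.invertible
  refine ⟨Matrix.fromBlocks 1 0 (C⁻¹ * B) 1, by simp [isUnit_iff_isUnit_det], ?_⟩
  rw [fromBlocks_eq_of_invertible₂₂ A Bᵀ B C]
  simp [fromBlocks_transpose, transpose_nonsing_inv, hC]

theorem IsHermitian.isCongr_diagonal_eigenvalues {A : Matrix ι ι ℝ} (hA : A.IsHermitian) :
    A.IsCongr (diagonal hA.eigenvalues) := by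
  refine ⟨star (hA.eigenvectorUnitary : Matrix ι ι ℝ),
    Unitary.isUnit_coe (U := star hA.eigenvectorUnitary), ?_⟩
  conv_lhs => rw [hA.spectral_theorem]
  simp [star_eq_conjTranspose, conjTranspose_eq_transpose_of_trivial, Matrix.mul_assoc]

section LinearOrderedField

variable {𝕜 : Type*} [Field 𝕜] [LinearOrder 𝕜] [IsStrictOrderedRing 𝕜]

theorem IsCongr.sigPos_toQuadraticForm' {A : Matrix ι ι 𝕜} {w : ι → 𝕜}
    (h : A.IsCongr (diagonal w)) : sigPos A.toQuadraticForm' = #{i | 0 < w i} := by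
  rw [sigPos_of_equiv_weightedSumSquares
      (toQuadraticForm'_diagonal w ▸ h.toQuadraticForm'_equivalent),
    Set.ncard_eq_toFinset_card', Set.toFinset_ofPred]

theorem IsCongr.sigNeg_toQuadraticForm' {A : Matrix ι ι 𝕜} {w : ι → 𝕜}
    (h : A.IsCongr (diagonal w)) : sigNeg A.toQuadraticForm' = #{i | w i < 0} := by
  rw [sigNeg_of_equiv_weightedSumSquares
      (toQuadraticForm'_diagonal w ▸ h.toQuadraticForm'_equivalent),
    Set.ncard_eq_toFinset_card', Set.toFinset_ofPred]

end LinearOrderedField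

theorem IsHermitian.card_eigenvalues_pos_eq {A : Matrix ι ι ℝ} (hA : A.IsHermitian) {w : ι → ℝ}
    (h : A.IsCongr (diagonal w)) : #{i | 0 < hA.eigenvalues i} = #{i | 0 < w i} := by
  rw [← h.sigPos_toQuadraticForm', hA.isCongr_diagonal_eigenvalues.sigPos_toQuadraticForm']

theorem IsHermitian.card_eigenvalues_neg_eq {A : Matrix ι ι ℝ} (hA : A.IsHermitian) {w : ι → ℝ}
    (h : A.IsCongr (diagonal w)) : #{i | hA.eigenvalues i < 0} = #{i | w i < 0} := by
  rw [← h.sigNeg_toQuadraticForm', hA.isCongr_diagonal_eigenvalues.sigNeg_toQuadraticForm']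

section Augmented

variable {A : Matrix ι ι ℝ} {J : Matrix κ ι ℝ} {D : Matrix κ κ ℝ}

theorem isCongr_fromBlocks_neg_diagonal_eigenvalues (hD : D.IsHermitian) (hDu : IsUnit D)
    (hS : (A + Jᵀ * D⁻¹ * J).IsHermitian) :
    (fromBlocks A Jᵀ J (-D)).IsCongr (diagonal (Sum.elim hS.eigenvalues (-hD.eigenvalues))) := by
  have hschur : A - Jᵀ * (-D)⁻¹ * J = A + Jᵀ * D⁻¹ * J := by
    rw [inv_eq_left_inv (B := -D⁻¹)
      (by rw [neg_mul_neg, nonsing_inv_mul D ((isUnit_iff_isUnit_det D).1 hDu)])]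
    simp [sub_eq_add_neg, Matrix.mul_assoc]
  have h := isCongr_fromBlocks_schur A J hDu.neg
    (by simpa [conjTranspose_eq_transpose_of_trivial] using hD.eq)
  rw [hschur] at h
  rw [← fromBlocks_diagonal]
  exact h.trans (hS.isCongr_diagonal_eigenvalues.fromBlocks
    (diagonal_neg hD.eigenvalues ▸ hD.isCongr_diagonal_eigenvalues.neg))

theorem inertia_fromBlocks_neg_iff_posDef (hD : D.PosDef)
    (hK : (fromBlocks A Jᵀ J (-D)).IsHermitian) :
    (#{i | 0 < hK.eigenvalues i} = Fintype.card ι ∧ #{i | hK.eigenvalues i < 0} = Fintype.card κ ∧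
      #{i | hK.eigenvalues i = 0} = 0) ↔ (A + Jᵀ * D⁻¹ * J).PosDef := by
  have hJDJ : (Jᵀ * D⁻¹ * J).IsHermitian := by
    simpa [conjTranspose_eq_transpose_of_trivial] using
      isHermitian_conjTranspose_mul_mul J hD.isHermitian.inv
  have hS : (A + Jᵀ * D⁻¹ * J).IsHermitian := (isHermitian_fromBlocks_iff.1 hK).1.add hJDJ
  have hcongr := isCongr_fromBlocks_neg_diagonal_eigenvalues hD.isHermitian hD.isUnit hS
  have hpos : #{i | 0 < hK.eigenvalues i} = #{i | 0 < hS.eigenvalues i} := by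
    rw [hK.card_eigenvalues_pos_eq hcongr, Finset.card_filter_sum_elim (0 < ·)]
    simp [fun b => (hD.eigenvalues_pos b).not_gt]
  have hneg : #{i | hK.eigenvalues i < 0} = #{i | hS.eigenvalues i < 0} + Fintype.card κ := by
    rw [hK.card_eigenvalues_neg_eq hcongr, Finset.card_filter_sum_elim (· < (0 : ℝ))]
    simp [hD.eigenvalues_pos]
  have hKcount := card_pos_add_card_neg_add_card_eq_zero hK.eigenvalues
  have hScount := card_pos_add_card_neg_add_card_eq_zero hS.eigenvalues
  rw [Fintype.card_sum] at hKcount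
  have hall : (∀ i, 0 < hS.eigenvalues i) ↔ #{i | 0 < hS.eigenvalues i} = Fintype.card ι := by
    rw [← Finset.card_univ, Finset.card_filter_eq_iff]
    simp
  rw [hS.posDef_iff_eigenvalues_pos, hall]
  omega

end Augmented

end Matrix

theorem augmented_inertia_iff_condensed_posdef_general (n m : ℕ)
    (W : Matrix (Fin n) (Fin n) ℝ)
    (J : Matrix (Fin m) (Fin n) ℝ)
    (dvec : Fin m → ℝ) (hd : ∀ i, 0 < dvec i)
    (D : Matrix (Fin m) (Fin m) ℝ) (hD : D = Matrix.diagonal dvec)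
    (δp : ℝ)
    (hK : (Matrix.fromBlocks (W + δp • (1 : Matrix (Fin n) (Fin n) ℝ)) Jᵀ J
        (-D)).IsHermitian) :
    ((Finset.univ.filter fun i => 0 < hK.eigenvalues i).card = n ∧
     (Finset.univ.filter fun i => hK.eigenvalues i < 0).card = m ∧
     (Finset.univ.filter fun i => hK.eigenvalues i = 0).card = 0) ↔
    (W + δp • (1 : Matrix (Fin n) (Fin n) ℝ) + Jᵀ * D⁻¹ * J).PosDef := by
  have hDpos : D.PosDef := hD ▸ posDef_diagonal_iff.2 hd
  simpa using inertia_fromBlocks_neg_iff_posDef hDpos hK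

/-- The augmented KKT matrix `K = [[W + δₚI, Jᵀ], [J, −D]]` has inertia `(n, m, 0)`
if and only if the primal condensed matrix `W + δₚI + Jᵀ D⁻¹ J` is positive definite. -/
theorem augmented_inertia_iff_condensed_posdef (n m : ℕ)
    (W : Matrix (Fin n) (Fin n) ℝ) (hW : W.IsHermitian)
    (J : Matrix (Fin m) (Fin n) ℝ)
    (dvec : Fin m → ℝ) (hd : ∀ i, 0 < dvec i)
    (D : Matrix (Fin m) (Fin m) ℝ) (hD : D = Matrix.diagonal dvec)
    (δp : ℝ) (hδp : 0 ≤ δp)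
    (hK : (Matrix.fromBlocks (W + δp • (1 : Matrix (Fin n) (Fin n) ℝ)) Jᵀ J
        (-D)).IsHermitian) :
    ((Finset.univ.filter fun i => 0 < hK.eigenvalues i).card = n ∧
     (Finset.univ.filter fun i => hK.eigenvalues i < 0).card = m ∧
     (Finset.univ.filter fun i => hK.eigenvalues i = 0).card = 0) ↔
    (W + δp • (1 : Matrix (Fin n) (Fin n) ℝ) + Jᵀ * D⁻¹ * J).PosDef :=
  augmented_inertia_iff_condensed_posdef_general n m W J dvec hd D hD δp hK
end
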